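/- Let g ∈ G be a Lebesgue-measure-preserving piecewise affine map of [0,1] with dyadic breakpoints and slopes ±2^k. If g is topologically mixing, then g is locally eventually onto: for every nonempty open U ⊆ [0,1] there exists N with g^N(U) = [0,1]. -/

import Mathlib

open Set MeasureTheory

/-- A real number is dyadic if it is an integer divided by a power of 2. -/
def IsDyadic (x : ℝ) : Prop := ∃ (z : ℤ) (n : ℕ), x = (z : ℝ) / 2 ^ n

/-- Membership in the Lebesgue-measure-preserving Thompson monoid 𝔾. -/
def InG (g : ℝ → ℝ) : Prop :=
  ContinuousOn g (Icc 0 1) ∧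
  MapsTo g (Icc (0:ℝ) 1) (Icc (0:ℝ) 1) ∧
  SurjOn g (Icc (0:ℝ) 1) (Icc (0:ℝ) 1) ∧
  (∀ A ⊆ Icc (0:ℝ) 1, MeasurableSet A →
    volume (g ⁻¹' A ∩ Icc 0 1) = volume A) ∧
  ∃ (n : ℕ) (p : ℕ → ℝ), 0 < n ∧ p 0 = 0 ∧ p n = 1 ∧
    (∀ i < n, p i < p (i + 1)) ∧ (∀ i ≤ n, IsDyadic (p i)) ∧
    ∀ i < n, ∃ (k : ℤ) (ε b : ℝ), (ε = 1 ∨ ε = -1) ∧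
      ∀ x ∈ Icc (p i) (p (i + 1)), g x = ε * 2 ^ k * x + b

/-- A relatively open subset of `[0,1]`. -/
def RelOpen (U : Set ℝ) : Prop := ∃ V : Set ℝ, IsOpen V ∧ U = V ∩ Icc 0 1

/-- Topological mixing on `[0,1]`. -/
def TopMixing (g : ℝ → ℝ) : Prop :=
  ∀ U V : Set ℝ, RelOpen U → RelOpen V → U.Nonempty → V.Nonempty →
    ∃ N : ℕ, ∀ n ≥ N, (g^[n] '' U ∩ V).Nonempty

/-- Locally eventually onto on `[0,1]`. -/
def LEO (g : ℝ → ℝ) : Prop :=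
  ∀ U : Set ℝ, RelOpen U → U.Nonempty → ∃ N : ℕ, g^[N] '' U = Icc 0 1
/-!
Fix a small relatively open interval `J ⊆ U`. Its images `gⁿ(J)` are intervals, and mixing
forces every interior point of `[0,1]` into `gⁿ(J)` for all large `n`. The set of points that
eventually lie in `gⁿ(J)` is carried into itself by `g`, so an endpoint of `[0,1]` outside it has
all of its preimages among the endpoints. Measure preservation says that an endpoint whose only
preimage is an endpoint is reached with slope `±1`, so near it `g` is the identity or the flip
`x ↦ 1 - x`; then `g` or `g²` fixes a whole interval pointwise, which mixing forbids. Hence both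
`0` and `1` eventually lie in the interval `gⁿ(J)`, which is then all of `[0,1]`.
-/

open Filter Function

lemma relOpen_Ioo {a b : ℝ} (ha : 0 ≤ a) (hb : b ≤ 1) : RelOpen (Ioo a b) :=
  ⟨Ioo a b, isOpen_Ioo,
    (inter_eq_left.2 (Ioo_subset_Icc_self.trans (Icc_subset_Icc ha hb))).symm⟩

lemma RelOpen.subset_Icc {U : Set ℝ} (hU : RelOpen U) : U ⊆ Icc 0 1 := by
  obtain ⟨V, -, rfl⟩ := hU
  exact inter_subset_right

lemma RelOpen.exists_ordConnected_subset {U : Set ℝ} (hU : RelOpen U) (hne : U.Nonempty) :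
    ∃ J ⊆ U, RelOpen J ∧ J.Nonempty ∧ J.OrdConnected := by
  obtain ⟨V, hV, rfl⟩ := hU
  obtain ⟨x, hxV, hxI⟩ := hne
  obtain ⟨ε, hε, hball⟩ := Metric.isOpen_iff.1 hV x hxV
  refine ⟨Metric.ball x ε ∩ Icc 0 1, inter_subset_inter_left _ hball,
    ⟨_, Metric.isOpen_ball, rfl⟩, ⟨x, Metric.mem_ball_self hε, hxI⟩, ?_⟩
  rw [Real.ball_eq_Ioo]
  infer_instance

lemma not_topMixing_of_isPeriodicPt {g : ℝ → ℝ} {m : ℕ} {c d : ℝ} (hm : 0 < m) (hc : 0 ≤ c)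
    (hcd : c < d) (hd : d ≤ 1) (hper : ∀ x ∈ Icc c d, IsPeriodicPt g m x) : ¬ TopMixing g := by
  intro htm
  obtain ⟨e, hce, hed⟩ := exists_between hcd
  obtain ⟨N, hN⟩ := htm (Ioo e d) (Ioo c e) (relOpen_Ioo (by linarith) hd)
    (relOpen_Ioo hc (by linarith)) (nonempty_Ioo.2 (by linarith)) (nonempty_Ioo.2 (by linarith))
  obtain ⟨_, ⟨x, hx, rfl⟩, hxV⟩ := hN (m * N) (Nat.le_mul_of_pos_left N hm)
  have hfix : g^[m * N] x = x := (hper x ⟨by linarith [hx.1], hx.2.le⟩).mul_const N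
  rw [hfix] at hxV
  linarith [hx.1, hxV.2]

lemma TopMixing.eventually_mem_image {g : ℝ → ℝ} (htm : TopMixing g) {J : Set ℝ}
    (hJ : RelOpen J) (hJne : J.Nonempty) (hconn : ∀ m, IsPreconnected (g^[m] '' J)) {z : ℝ}
    (hz : z ∈ Ioo 0 1) : ∀ᶠ m in atTop, z ∈ g^[m] '' J := by
  obtain ⟨N₁, h₁⟩ := htm J (Ioo 0 z) hJ (relOpen_Ioo le_rfl hz.2.le) hJne (nonempty_Ioo.2 hz.1)
  obtain ⟨N₂, h₂⟩ := htm J (Ioo z 1) hJ (relOpen_Ioo hz.1.le le_rfl) hJne (nonempty_Ioo.2 hz.2)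
  filter_upwards [eventually_ge_atTop N₁, eventually_ge_atTop N₂] with m hm₁ hm₂
  obtain ⟨y₁, hy₁, hy₁z⟩ := h₁ m hm₁
  obtain ⟨y₂, hy₂, hy₂z⟩ := h₂ m hm₂
  exact (hconn m).Icc_subset hy₁ hy₂ ⟨hy₁z.2.le, hy₂z.1.le⟩

lemma eventually_apply_mem_iterate_image {α : Type*} {g : α → α} {J : Set α} {y : α}
    (h : ∀ᶠ m in atTop, y ∈ g^[m] '' J) : ∀ᶠ m in atTop, g y ∈ g^[m] '' J := by
  rw [← map_add_atTop_eq_nat 1, eventually_map]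
  filter_upwards [h] with m hm
  rw [iterate_succ', image_comp]
  exact mem_image_of_mem g hm

lemma mem_of_mapsTo_of_surjOn {α : Type*} {g : α → α} {X E : Set α} {e f : α} (hef : e ≠ f)
    (he : e ∈ X) (hf : f ∈ X) (hsurj : SurjOn g X X) (hinv : MapsTo g E E)
    (hE : ∀ x ∈ X, x ∉ E → x = e ∨ x = f) (hfix : ¬ ∀ x ∈ X, g x = e ↔ x = e)
    (hswap : ¬ ((∀ x ∈ X, g x = e ↔ x = f) ∧ ∀ x ∈ X, g x = f ↔ x = e)) : e ∈ E := by
  by_contra heE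
  have hpre : ∀ y ∉ E, ∀ x ∈ X, g x = y → x = e ∨ x = f :=
    fun y hy x hx hxy => hE x hx fun hxE => hy (hxy ▸ hinv hxE)
  obtain ⟨xe, hxe, hgxe⟩ := hsurj he
  obtain ⟨xf, hxf, hgxf⟩ := hsurj hf
  by_cases hfE : f ∈ E
  · have hnf : ∀ x ∈ X, g x = e → x ≠ f := fun x _ h hxf => heE (h ▸ hxf ▸ hinv hfE)
    grind
  · grind

lemma exists_Icc_eq_sep_abs_sub_le {e t : ℝ} (he : e = 0 ∨ e = 1) (ht : t ≤ 1) :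
    ∃ a, {x ∈ Icc (0:ℝ) 1 | |x - e| ≤ t} = Icc a (a + t) := by
  rcases he with rfl | rfl
  · refine ⟨0, ext fun x => ?_⟩
    simp only [mem_ofPred_eq, mem_Icc, sub_zero, zero_add, abs_le]
    constructor <;> intro h <;> refine ⟨?_, ?_⟩ <;> first | linarith | constructor <;> linarith
  · refine ⟨1 - t, ext fun x => ?_⟩
    simp only [mem_ofPred_eq, mem_Icc, abs_le, sub_add_cancel]
    constructor <;> intro h <;> refine ⟨?_, ?_⟩ <;> first | linarith | constructor <;> linarith

lemma volume_sep_abs_sub_le {e t : ℝ} (he : e = 0 ∨ e = 1) (ht : t ≤ 1) :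
    volume {x ∈ Icc (0:ℝ) 1 | |x - e| ≤ t} = ENNReal.ofReal t := by
  obtain ⟨a, ha⟩ := exists_Icc_eq_sep_abs_sub_le he ht
  rw [ha, Real.volume_Icc, add_sub_cancel_left]

lemma measurableSet_sep_abs_sub_le {e t : ℝ} (he : e = 0 ∨ e = 1) (ht : t ≤ 1) :
    MeasurableSet {x ∈ Icc (0:ℝ) 1 | |x - e| ≤ t} := by
  obtain ⟨a, ha⟩ := exists_Icc_eq_sep_abs_sub_le he ht
  exact ha ▸ measurableSet_Icc

lemma exists_pos_le_abs_sub_of_unique_preimage {g : ℝ → ℝ} (hcont : ContinuousOn g (Icc 0 1))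
    {x₀ y₀ δ : ℝ} (huniq : ∀ x ∈ Icc (0:ℝ) 1, g x = y₀ ↔ x = x₀) (hδ : 0 < δ) :
    ∃ c, 0 < c ∧ ∀ x ∈ Icc (0:ℝ) 1, δ ≤ |x - x₀| → c ≤ |g x - y₀| := by
  have hK : IsCompact {x ∈ Icc (0:ℝ) 1 | δ ≤ |x - x₀|} :=
    isCompact_Icc.inter_right (isClosed_le continuous_const (continuous_sub_right x₀).abs)
  obtain ⟨c, hc, hcK⟩ := hK.exists_forall_le'
    ((hcont.sub continuousOn_const).abs.mono inter_subset_left) fun x ⟨hx, hxδ⟩ => by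
      refine abs_pos.2 (sub_ne_zero.2 fun h => ?_)
      rw [(huniq x hx).1 h, sub_self, abs_zero] at hxδ
      linarith
  exact ⟨c, hc, fun x hx hxδ => hcK x ⟨hx, hxδ⟩⟩

lemma abs_sub_eq_of_affine_of_unique_preimage {g : ℝ → ℝ} (hcont : ContinuousOn g (Icc 0 1))
    (hmaps : MapsTo g (Icc 0 1) (Icc 0 1))
    (hvol : ∀ A ⊆ Icc (0:ℝ) 1, MeasurableSet A → volume (g ⁻¹' A ∩ Icc 0 1) = volume A)
    {x₀ y₀ s b δ : ℝ} (hx₀ : x₀ = 0 ∨ x₀ = 1) (hy₀ : y₀ = 0 ∨ y₀ = 1)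
    (huniq : ∀ x ∈ Icc (0:ℝ) 1, g x = y₀ ↔ x = x₀) (hδ : 0 < δ) (hs : s ≠ 0)
    (haff : ∀ x ∈ Icc (0:ℝ) 1, |x - x₀| ≤ δ → g x = s * x + b) :
    ∀ x ∈ Icc (0:ℝ) 1, |x - x₀| ≤ δ → |g x - y₀| = |x - x₀| := by
  have hx₀I : x₀ ∈ Icc (0:ℝ) 1 := by rcases hx₀ with rfl | rfl <;> norm_num
  have hlin : ∀ x ∈ Icc (0:ℝ) 1, |x - x₀| ≤ δ → |g x - y₀| = |s| * |x - x₀| := by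
    intro x hx hxδ
    rw [← (huniq x₀ hx₀I).2 rfl, haff x hx hxδ, haff x₀ hx₀I (by simpa using hδ.le), ← abs_mul]
    ring_nf
  obtain ⟨c, hc, hcK⟩ := exists_pos_le_abs_sub_of_unique_preimage hcont huniq hδ
  have hs' : 0 < |s| := abs_pos.2 hs
  obtain ⟨t, ht0, htmin⟩ :=
    exists_between (lt_min (lt_min hc one_pos) (mul_pos hs' (lt_min hδ one_pos)))
  obtain ⟨⟨htc, ht1⟩, hts⟩ := by simpa only [lt_min_iff] using htmin
  rw [← div_lt_iff₀' hs'] at hts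
  -- the preimage of the `t`-neighbourhood of `y₀` is the `t / |s|`-neighbourhood of `x₀`
  have hpre : g ⁻¹' {y ∈ Icc (0:ℝ) 1 | |y - y₀| ≤ t} ∩ Icc 0 1 =
      {x ∈ Icc (0:ℝ) 1 | |x - x₀| ≤ t / |s|} := by
    ext x
    simp only [mem_inter_iff, mem_preimage, mem_ofPred_eq]
    constructor
    · rintro ⟨⟨-, hgx⟩, hx⟩
      refine ⟨hx, ?_⟩
      by_cases hxδ : |x - x₀| ≤ δ
      · rwa [le_div_iff₀ hs', mul_comm, ← hlin x hx hxδ]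
      · linarith [hcK x hx (not_le.1 hxδ).le]
    · rintro ⟨hx, hxt⟩
      have hxδ : |x - x₀| ≤ δ := hxt.trans (hts.le.trans (min_le_left _ _))
      refine ⟨⟨hmaps hx, ?_⟩, hx⟩
      rwa [hlin x hx hxδ, ← le_div_iff₀' hs']
  have hvolt := hvol _ (sep_subset _ _) (measurableSet_sep_abs_sub_le hy₀ ht1.le)
  rw [hpre, volume_sep_abs_sub_le hx₀ (hts.le.trans (min_le_right _ _)),
    volume_sep_abs_sub_le hy₀ ht1.le,
    ENNReal.ofReal_eq_ofReal_iff (div_nonneg ht0.le hs'.le) ht0.le, div_eq_iff hs'.ne', eq_comm,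
    mul_eq_left₀ ht0.ne'] at hvolt
  intro x hx hxδ
  rw [hlin x hx hxδ, hvolt, one_mul]

lemma InG.exists_affine_near_endpoint {g : ℝ → ℝ} (hg : InG g) {x₀ : ℝ} (hx₀ : x₀ = 0 ∨ x₀ = 1) :
    ∃ s b δ : ℝ, s ≠ 0 ∧ 0 < δ ∧ ∀ x ∈ Icc (0:ℝ) 1, |x - x₀| ≤ δ → g x = s * x + b := by
  obtain ⟨-, -, -, -, n, p, hn, hp0, hpn, hplt, -, hpieces⟩ := hg
  have hslope : ∀ (k : ℤ) (ε : ℝ), (ε = 1 ∨ ε = -1) → ε * (2:ℝ) ^ k ≠ 0 := fun k ε hε =>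
    mul_ne_zero (by rcases hε with rfl | rfl <;> norm_num) (zpow_ne_zero k two_ne_zero)
  rcases hx₀ with rfl | rfl
  · obtain ⟨k, ε, b, hε, hf⟩ := hpieces 0 hn
    refine ⟨ε * 2 ^ k, b, p 1, hslope k ε hε, hp0 ▸ hplt 0 hn, fun x hx hxδ => hf x ?_⟩
    rw [hp0]
    exact ⟨hx.1, (le_abs_self x).trans (by simpa using hxδ)⟩
  · have hlast := hplt (n - 1) (by omega)
    obtain ⟨k, ε, b, hε, hf⟩ := hpieces (n - 1) (by omega)
    rw [Nat.sub_add_cancel hn, hpn] at hlast hf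
    refine ⟨ε * 2 ^ k, b, 1 - p (n - 1), hslope k ε hε, by linarith,
      fun x hx hxδ => hf x ⟨?_, hx.2⟩⟩
    linarith [neg_abs_le (x - 1)]

lemma InG.abs_sub_eq_near_endpoint {g : ℝ → ℝ} (hg : InG g) {x₀ y₀ : ℝ} (hx₀ : x₀ = 0 ∨ x₀ = 1)
    (hy₀ : y₀ = 0 ∨ y₀ = 1) (huniq : ∀ x ∈ Icc (0:ℝ) 1, g x = y₀ ↔ x = x₀) :
    ∃ δ, 0 < δ ∧ δ ≤ 1 ∧ ∀ x ∈ Icc (0:ℝ) 1, |x - x₀| ≤ δ → |g x - y₀| = |x - x₀| := by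
  obtain ⟨s, b, δ, hs, hδ, haff⟩ := hg.exists_affine_near_endpoint hx₀
  obtain ⟨hcont, hmaps, -, hvol, -⟩ := hg
  have habs :=
    abs_sub_eq_of_affine_of_unique_preimage hcont hmaps hvol hx₀ hy₀ huniq hδ hs haff
  exact ⟨min δ 1, lt_min hδ one_pos, min_le_right _ _,
    fun x hx hxδ => habs x hx (hxδ.trans (min_le_left _ _))⟩

lemma InG.not_topMixing_of_unique_preimage_fixed {g : ℝ → ℝ} (hg : InG g) {e : ℝ}
    (he : e = 0 ∨ e = 1) (huniq : ∀ x ∈ Icc (0:ℝ) 1, g x = e ↔ x = e) : ¬ TopMixing g := by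
  obtain ⟨δ, hδ, hδ1, habs⟩ := hg.abs_sub_eq_near_endpoint he he huniq
  have hmaps := hg.2.1
  rcases he with rfl | rfl
  · refine not_topMixing_of_isPeriodicPt one_pos le_rfl hδ hδ1 fun x hx => ?_
    have hxI : x ∈ Icc (0:ℝ) 1 := ⟨hx.1, hx.2.trans hδ1⟩
    have := habs x hxI (by rw [sub_zero, abs_of_nonneg hx.1]; exact hx.2)
    rwa [sub_zero, sub_zero, abs_of_nonneg (hmaps hxI).1, abs_of_nonneg hx.1] at this
  · refine not_topMixing_of_isPeriodicPt (c := 1 - δ) one_pos (by linarith) (by linarith) le_rfl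
      fun x hx => ?_
    have hxI : x ∈ Icc (0:ℝ) 1 := ⟨by linarith [hx.1], hx.2⟩
    have := habs x hxI (by rw [abs_of_nonpos (by linarith [hx.2])]; linarith [hx.1])
    rw [abs_of_nonpos (sub_nonpos.2 (hmaps hxI).2), abs_of_nonpos (sub_nonpos.2 hx.2)] at this
    show g x = x
    linarith

lemma InG.not_topMixing_of_unique_preimage_swap {g : ℝ → ℝ} (hg : InG g)
    (h0 : ∀ x ∈ Icc (0:ℝ) 1, g x = 0 ↔ x = 1) (h1 : ∀ x ∈ Icc (0:ℝ) 1, g x = 1 ↔ x = 0) :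
    ¬ TopMixing g := by
  obtain ⟨δ₀, hδ₀, hδ₀1, habs₀⟩ := hg.abs_sub_eq_near_endpoint (Or.inl rfl) (Or.inr rfl) h1
  obtain ⟨δ₁, hδ₁, -, habs₁⟩ := hg.abs_sub_eq_near_endpoint (Or.inr rfl) (Or.inl rfl) h0
  have hmaps := hg.2.1
  refine not_topMixing_of_isPeriodicPt two_pos le_rfl (lt_min hδ₀ hδ₁)
    ((min_le_left _ _).trans hδ₀1) fun x hx => ?_
  have hxI : x ∈ Icc (0:ℝ) 1 := ⟨hx.1, hx.2.trans ((min_le_left _ _).trans hδ₀1)⟩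
  have hx1I : 1 - x ∈ Icc (0:ℝ) 1 := ⟨by linarith [hxI.2], by linarith [hxI.1]⟩
  have hgx : g x = 1 - x := by
    have := habs₀ x hxI (by rw [sub_zero, abs_of_nonneg hx.1]; exact hx.2.trans (min_le_left _ _))
    rw [abs_of_nonpos (sub_nonpos.2 (hmaps hxI).2), sub_zero, abs_of_nonneg hx.1] at this
    linarith
  have hg1x : g (1 - x) = x := by
    have := habs₁ (1 - x) hx1I
      (by rw [sub_sub_cancel_left, abs_neg, abs_of_nonneg hx.1]
          exact hx.2.trans (min_le_right _ _))
    rwa [sub_zero, sub_sub_cancel_left, abs_neg, abs_of_nonneg (hmaps hx1I).1,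
      abs_of_nonneg hx.1] at this
  show g (g x) = x
  rw [hgx, hg1x]

theorem stmt_14 (g : ℝ → ℝ) (hg : InG g) (htm : TopMixing g) : LEO g := by
  intro U hU hUne
  have ⟨hcont, hmaps, hsurj, _⟩ := hg
  obtain ⟨J, hJU, hJ, hJne, hJconn⟩ := hU.exists_ordConnected_subset hUne
  have himage : ∀ m, IsPreconnected (g^[m] '' J) := fun m =>
    hJconn.isPreconnected.image _ ((hcont.iterate hmaps m).mono hJ.subset_Icc)
  let E := {y | ∀ᶠ m in atTop, y ∈ g^[m] '' J}
  have hinv : MapsTo g E E := fun _ hy => eventually_apply_mem_iterate_image hy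
  have hE : ∀ x ∈ Icc (0:ℝ) 1, x ∉ E → x = 0 ∨ x = 1 := by
    intro x hx hxE
    by_contra! h
    exact hxE (htm.eventually_mem_image hJ hJne himage
      ⟨lt_of_le_of_ne hx.1 (Ne.symm h.1), lt_of_le_of_ne hx.2 h.2⟩)
  have h0 : (0:ℝ) ∈ E := mem_of_mapsTo_of_surjOn zero_ne_one (left_mem_Icc.2 zero_le_one)
    (right_mem_Icc.2 zero_le_one) hsurj hinv hE
    (fun h => hg.not_topMixing_of_unique_preimage_fixed (Or.inl rfl) h htm)
    (fun h => hg.not_topMixing_of_unique_preimage_swap h.1 h.2 htm)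
  have h1 : (1:ℝ) ∈ E := mem_of_mapsTo_of_surjOn one_ne_zero (right_mem_Icc.2 zero_le_one)
    (left_mem_Icc.2 zero_le_one) hsurj hinv (fun x hx hxE => (hE x hx hxE).symm)
    (fun h => hg.not_topMixing_of_unique_preimage_fixed (Or.inr rfl) h htm)
    (fun h => hg.not_topMixing_of_unique_preimage_swap h.2 h.1 htm)
  obtain ⟨N, hN0, hN1⟩ := (h0.and h1).exists
  exact ⟨N, ((hmaps.iterate N).mono_left hU.subset_Icc).image_subset.antisymm
    (((himage N).Icc_subset hN0 hN1).trans (image_mono hJU))⟩
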